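/- Let 𝒢 ⊆ ℋ be sub-σ-algebras on a probability space and let Z₁, Z₀ be square-integrable real random variables with E[Z₁] = E[Z₀]. Then E[Var[Z₁|𝒢]] + E[Var[Z₀|𝒢]] + ½·Var[E[Z₁ − Z₀|𝒢]] ≥ E[Var[Z₁|ℋ]] + E[Var[Z₀|ℋ]] + ½·Var[E[Z₁ − Z₀|ℋ]], and the inequality is strict unless E[Z₁ + Z₀ | ℋ] = E[Z₁ + Z₀ | 𝒢] almost surely; in fact the difference of the two sides equals ½·E[Var[E[Z₁ + Z₀ | ℋ] | 𝒢]]. -/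

import Mathlib

open MeasureTheory ProbabilityTheory

section Aux

variable {Ω : Type*} {m0 : MeasurableSpace Ω} {μ : Measure Ω} [IsProbabilityMeasure μ]

private lemma integrable_mul_of_memL2 {f g : Ω → ℝ} (hf : MemLp f 2 μ) (hg : MemLp g 2 μ) :
    Integrable (fun ω => f ω * g ω) μ := by
  have h : Integrable (fun ω =>
      (((f ω + g ω) ^ 2 - f ω ^ 2) - g ω ^ 2) / 2) μ :=
    ((((hf.add hg).integrable_sq.sub hf.integrable_sq).sub hg.integrable_sq).div_const 2)
  exact h.congr (by filter_upwards with ω; ring)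

private lemma memL2_condexp (m : MeasurableSpace Ω) (hm : m ≤ m0) {Z : Ω → ℝ}
    (hZ : MemLp Z 2 μ) : MemLp (μ[Z|m]) 2 μ := by
  set g : Lp ℝ 2 μ := (condExpL2 ℝ ℝ hm (hZ.toLp Z) : Lp ℝ 2 μ) with hgdef
  letI : MeasurableSpace Ω := m0
  have hae : (g : Ω → ℝ) =ᵐ[μ] μ[Z|m] := by
    refine ae_eq_condExp_of_forall_setIntegral_eq hm (hZ.integrable one_le_two) ?_ ?_ ?_
    · intro s _ _
      exact ((Lp.memLp g).integrable one_le_two).integrableOn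
    · intro s hs hμs
      rw [hgdef]
      rw [integral_condExpL2_eq hm (hZ.toLp Z) hs hμs.ne]
      exact setIntegral_congr_ae (hm s hs) (hZ.coeFn_toLp.mono fun x hx _ => hx)
    · exact aestronglyMeasurable_condExpL2 hm _
  exact MemLp.ae_eq hae (Lp.memLp g)

private lemma pyth (m : MeasurableSpace Ω) (hm : m ≤ m0) {Z : Ω → ℝ} (hZ : MemLp Z 2 μ) :
    ∫ ω, (Z ω - (μ[Z|m]) ω) ^ 2 ∂μ
      = (∫ ω, Z ω ^ 2 ∂μ) - ∫ ω, ((μ[Z|m]) ω) ^ 2 ∂μ := by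
  set C := μ[Z|m] with hCdef
  have hCm : MemLp C 2 μ := memL2_condexp m hm hZ
  have hint : Integrable (fun ω => C ω * Z ω) μ := integrable_mul_of_memL2 hCm hZ
  have hcross : ∫ ω, C ω * Z ω ∂μ = ∫ ω, C ω ^ 2 ∂μ := by
    have hmul : μ[(fun ω => C ω * Z ω)|m] =ᵐ[μ] fun ω => C ω * C ω := by
      have h := condExp_mul_of_aestronglyMeasurable_left (μ := μ) (m := m) (f := C) (g := Z)
        stronglyMeasurable_condExp.aestronglyMeasurable hint (hZ.integrable one_le_two)
      exact h
    calc ∫ ω, C ω * Z ω ∂μ = ∫ ω, (μ[(fun ω => C ω * Z ω)|m]) ω ∂μ :=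
          (integral_condExp hm).symm
      _ = ∫ ω, C ω * C ω ∂μ := integral_congr_ae hmul
      _ = ∫ ω, C ω ^ 2 ∂μ := by apply integral_congr_ae; filter_upwards with ω; ring
  have e1 : ∫ ω, (Z ω - C ω) ^ 2 ∂μ
      = ∫ ω, (Z ω ^ 2 - 2 * (C ω * Z ω) + C ω ^ 2) ∂μ := by
    apply integral_congr_ae; filter_upwards with ω; ring
  have ha : Integrable (fun ω => Z ω ^ 2 - 2 * (C ω * Z ω)) μ :=
    hZ.integrable_sq.sub (hint.const_mul 2)
  have hb : Integrable (fun ω => 2 * (C ω * Z ω)) μ := hint.const_mul 2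
  rw [e1, integral_add ha hCm.integrable_sq, integral_sub hZ.integrable_sq hb,
    integral_const_mul, hcross]
  ring

private lemma T_eq {Z1 Z0 : Ω → ℝ} (h1 : MemLp Z1 2 μ) (h0 : MemLp Z0 2 μ)
    (hmean : ∫ ω, Z1 ω ∂μ = ∫ ω, Z0 ω ∂μ)
    (m : MeasurableSpace Ω) (hm : m ≤ m0) :
    (∫ ω, (Z1 ω - (μ[Z1|m]) ω) ^ 2 ∂μ) + (∫ ω, (Z0 ω - (μ[Z0|m]) ω) ^ 2 ∂μ)
      + (1 / 2) * variance (μ[fun ω => Z1 ω - Z0 ω|m]) μ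
    = (∫ ω, Z1 ω ^ 2 ∂μ) + (∫ ω, Z0 ω ^ 2 ∂μ)
      - (1 / 2) * ∫ ω, ((μ[fun ω => Z1 ω + Z0 ω|m]) ω) ^ 2 ∂μ := by
  have hi1 : Integrable Z1 μ := h1.integrable one_le_two
  have hi0 : Integrable Z0 μ := h0.integrable one_le_two
  have hC1 : MemLp (μ[Z1|m]) 2 μ := memL2_condexp m hm h1
  have hC0 : MemLp (μ[Z0|m]) 2 μ := memL2_condexp m hm h0
  have hCD2 : MemLp (μ[fun ω => Z1 ω - Z0 ω|m]) 2 μ := memL2_condexp m hm (h1.sub h0)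
  -- mean of conditional expectation of the difference is zero
  have hmean0 : ∫ ω, (μ[fun ω => Z1 ω - Z0 ω|m]) ω ∂μ = 0 := by
    rw [integral_condExp hm, integral_sub hi1 hi0, hmean, sub_self]
  -- variance equals the second moment
  have hvar : variance (μ[fun ω => Z1 ω - Z0 ω|m]) μ
      = ∫ ω, ((μ[fun ω => Z1 ω - Z0 ω|m]) ω) ^ 2 ∂μ := by
    rw [variance_eq_sub hCD2]
    simp only [Pi.pow_apply]
    rw [hmean0]
    ring
  -- identify conditional expectations of sum and difference
  have hsub : μ[fun ω => Z1 ω - Z0 ω|m] =ᵐ[μ] fun ω => (μ[Z1|m]) ω - (μ[Z0|m]) ω := by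
    have h := condExp_sub (μ := μ) (m := m) hi1 hi0
    exact h
  have hadd : μ[fun ω => Z1 ω + Z0 ω|m] =ᵐ[μ] fun ω => (μ[Z1|m]) ω + (μ[Z0|m]) ω := by
    have h := condExp_add (μ := μ) (m := m) hi1 hi0
    exact h
  have hsq_sub : ∫ ω, ((μ[fun ω => Z1 ω - Z0 ω|m]) ω) ^ 2 ∂μ
      = ∫ ω, ((μ[Z1|m]) ω - (μ[Z0|m]) ω) ^ 2 ∂μ := by
    apply integral_congr_ae; filter_upwards [hsub] with ω h; rw [h]
  have hsq_add : ∫ ω, ((μ[fun ω => Z1 ω + Z0 ω|m]) ω) ^ 2 ∂μ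
      = ∫ ω, ((μ[Z1|m]) ω + (μ[Z0|m]) ω) ^ 2 ∂μ := by
    apply integral_congr_ae; filter_upwards [hadd] with ω h; rw [h]
  -- parallelogram law
  have hpar : (∫ ω, ((μ[Z1|m]) ω + (μ[Z0|m]) ω) ^ 2 ∂μ)
      + (∫ ω, ((μ[Z1|m]) ω - (μ[Z0|m]) ω) ^ 2 ∂μ)
      = 2 * (∫ ω, ((μ[Z1|m]) ω) ^ 2 ∂μ) + 2 * ∫ ω, ((μ[Z0|m]) ω) ^ 2 ∂μ := by
    have hia : Integrable (fun ω => ((μ[Z1|m]) ω + (μ[Z0|m]) ω) ^ 2) μ :=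
      (hC1.add hC0).integrable_sq
    have his : Integrable (fun ω => ((μ[Z1|m]) ω - (μ[Z0|m]) ω) ^ 2) μ :=
      (hC1.sub hC0).integrable_sq
    have h2 : ∫ ω, (((μ[Z1|m]) ω + (μ[Z0|m]) ω) ^ 2
        + ((μ[Z1|m]) ω - (μ[Z0|m]) ω) ^ 2) ∂μ
        = ∫ ω, (2 * ((μ[Z1|m]) ω) ^ 2 + 2 * ((μ[Z0|m]) ω) ^ 2) ∂μ := by
      apply integral_congr_ae; filter_upwards with ω; ring
    rw [← integral_add hia his, h2,
      integral_add (hC1.integrable_sq.const_mul 2) (hC0.integrable_sq.const_mul 2),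
      integral_const_mul, integral_const_mul]
  rw [pyth m hm h1, pyth m hm h0, hvar, hsq_sub, hsq_add]
  linarith

end Aux

/-- For sub-σ-algebras `𝒢 ⊆ ℋ` and square-integrable `Z₁, Z₀` with
`E[Z₁] = E[Z₀]`,
`E[Var[Z₁|𝒢]] + E[Var[Z₀|𝒢]] + ½·Var[E[Z₁ − Z₀|𝒢]]
  ≥ E[Var[Z₁|ℋ]] + E[Var[Z₀|ℋ]] + ½·Var[E[Z₁ − Z₀|ℋ]]`,
with strict inequality unless `E[Z₁ + Z₀ | ℋ] = E[Z₁ + Z₀ | 𝒢]` a.s.; moreover the difference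
of the two sides equals `½·E[Var[E[Z₁ + Z₀ | ℋ] | 𝒢]]`.
Here `E[Var[Z|m]]` is written in its equivalent form `E[(Z − E[Z|m])²]` and `Var` is the
(unconditional) variance. -/
theorem coarser_conditioning_variance_comparison
    {Ω : Type*} [m0 : MeasurableSpace Ω] (μ : Measure Ω) [IsProbabilityMeasure μ]
    (G H : MeasurableSpace Ω) (hGH : G ≤ H) (hH : H ≤ m0)
    (Z1 Z0 : Ω → ℝ) (h1 : MemLp Z1 2 μ) (h0 : MemLp Z0 2 μ)
    (hmean : ∫ ω, Z1 ω ∂μ = ∫ ω, Z0 ω ∂μ) :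
    ((∫ ω, (Z1 ω - (μ[Z1|H]) ω) ^ 2 ∂μ) + (∫ ω, (Z0 ω - (μ[Z0|H]) ω) ^ 2 ∂μ)
        + (1 / 2) * variance (μ[fun ω => Z1 ω - Z0 ω|H]) μ
      ≤ (∫ ω, (Z1 ω - (μ[Z1|G]) ω) ^ 2 ∂μ) + (∫ ω, (Z0 ω - (μ[Z0|G]) ω) ^ 2 ∂μ)
        + (1 / 2) * variance (μ[fun ω => Z1 ω - Z0 ω|G]) μ)
    ∧ (¬ ((μ[fun ω => Z1 ω + Z0 ω|H]) =ᵐ[μ] (μ[fun ω => Z1 ω + Z0 ω|G])) →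
      (∫ ω, (Z1 ω - (μ[Z1|H]) ω) ^ 2 ∂μ) + (∫ ω, (Z0 ω - (μ[Z0|H]) ω) ^ 2 ∂μ)
        + (1 / 2) * variance (μ[fun ω => Z1 ω - Z0 ω|H]) μ
      < (∫ ω, (Z1 ω - (μ[Z1|G]) ω) ^ 2 ∂μ) + (∫ ω, (Z0 ω - (μ[Z0|G]) ω) ^ 2 ∂μ)
        + (1 / 2) * variance (μ[fun ω => Z1 ω - Z0 ω|G]) μ)
    ∧ ((∫ ω, (Z1 ω - (μ[Z1|G]) ω) ^ 2 ∂μ) + (∫ ω, (Z0 ω - (μ[Z0|G]) ω) ^ 2 ∂μ)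
        + (1 / 2) * variance (μ[fun ω => Z1 ω - Z0 ω|G]) μ
      - ((∫ ω, (Z1 ω - (μ[Z1|H]) ω) ^ 2 ∂μ) + (∫ ω, (Z0 ω - (μ[Z0|H]) ω) ^ 2 ∂μ)
        + (1 / 2) * variance (μ[fun ω => Z1 ω - Z0 ω|H]) μ)
      = (1 / 2) * ∫ ω, ((μ[fun ω => Z1 ω + Z0 ω|H]) ω
          - (μ[μ[fun ω => Z1 ω + Z0 ω|H]|G]) ω) ^ 2 ∂μ) := by
  have hG : G ≤ m0 := hGH.trans hH
  have TG := T_eq h1 h0 hmean G hG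
  have TH := T_eq h1 h0 hmean H hH
  set SH : Ω → ℝ := μ[fun ω => Z1 ω + Z0 ω|H] with hSHdef
  have hSHm : MemLp SH 2 μ := memL2_condexp H hH (h1.add h0)
  have hpythW := pyth G hG hSHm
  have htower : μ[SH|G] =ᵐ[μ] μ[fun ω => Z1 ω + Z0 ω|G] :=
    condExp_condExp_of_le hGH hH
  have hsqG : ∫ ω, ((μ[SH|G]) ω) ^ 2 ∂μ = ∫ ω, ((μ[fun ω => Z1 ω + Z0 ω|G]) ω) ^ 2 ∂μ := by
    apply integral_congr_ae; filter_upwards [htower] with ω h; rw [h]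
  -- the key identity: difference equals half the expected squared increment
  have hdiff : ((∫ ω, (Z1 ω - (μ[Z1|G]) ω) ^ 2 ∂μ) + (∫ ω, (Z0 ω - (μ[Z0|G]) ω) ^ 2 ∂μ)
        + (1 / 2) * variance (μ[fun ω => Z1 ω - Z0 ω|G]) μ)
      - ((∫ ω, (Z1 ω - (μ[Z1|H]) ω) ^ 2 ∂μ) + (∫ ω, (Z0 ω - (μ[Z0|H]) ω) ^ 2 ∂μ)
        + (1 / 2) * variance (μ[fun ω => Z1 ω - Z0 ω|H]) μ)
      = (1 / 2) * ∫ ω, (SH ω - (μ[SH|G]) ω) ^ 2 ∂μ := by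
    rw [TG, TH]
    linarith [hpythW, hsqG]
  have hWnonneg : 0 ≤ ∫ ω, (SH ω - (μ[SH|G]) ω) ^ 2 ∂μ :=
    integral_nonneg fun ω => sq_nonneg _
  refine ⟨by linarith, ?_, hdiff⟩
  intro hne
  have hWpos : 0 < ∫ ω, (SH ω - (μ[SH|G]) ω) ^ 2 ∂μ := by
    rcases hWnonneg.lt_or_eq with h | h
    · exact h
    · exfalso
      have hint : Integrable (fun ω => (SH ω - (μ[SH|G]) ω) ^ 2) μ :=
        (hSHm.sub (memL2_condexp G hG hSHm)).integrable_sq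
      have hze : (fun ω => (SH ω - (μ[SH|G]) ω) ^ 2) =ᵐ[μ] 0 :=
        (integral_eq_zero_iff_of_nonneg_ae (Filter.Eventually.of_forall fun ω => sq_nonneg _)
          hint).mp h.symm
      apply hne
      have : SH =ᵐ[μ] μ[SH|G] := by
        filter_upwards [hze] with ω h
        have := sq_eq_zero_iff.mp h
        have := sub_eq_zero.mp this
        exact this
      exact this.trans htower
  linarith
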